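/- Let S be a left cancellative monoid and R a ring with a finite S-grading of support size d. If R_e is nilpotent of index r > 1 (i.e., (R_e)^r = 0), then R is nilpotent with r ≤ nd(R) ≤ dr; if r = 1 (R_e = 0), then nd(R) ≤ d + 1. -/

import Mathlib

/-- Product `a * l₀ * l₁ * ⋯` of a nonempty list of ring elements. -/
def mulList {R : Type*} [Mul R] (a : R) (l : List R) : R := l.foldl (· * ·) a

/-- `pw a n` is `aⁿ` for `n ≥ 1` (junk value `0` at `n = 0`). -/
def pw {R : Type*} [Mul R] [Zero R] (a : R) : ℕ → R
  | 0 => 0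
  | 1 => a
  | n + 2 => pw a (n + 1) * a

/-- Product of `n` elements given by `f` (junk `0` when `n = 0`). -/
def finProd {R : Type*} [Mul R] [Zero R] : {n : ℕ} → (Fin n → R) → R
  | 0, _ => 0
  | n + 1, f => mulList (f 0) (List.ofFn fun i : Fin n => f i.succ)

/-- `R ^ n = 0`: every product of `n` elements of `R` vanishes. -/
def PowZero (R : Type*) [Mul R] [Zero R] (n : ℕ) : Prop :=
  ∀ (a : R) (l : List R), l.length + 1 = n → mulList a l = 0

/-- `T ^ n = 0` for a subset `T` of a ring. -/
def PowZeroOn {R : Type*} [Mul R] [Zero R] (T : Set R) (n : ℕ) : Prop :=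
  ∀ (a : R) (l : List R), a ∈ T → (∀ x ∈ l, x ∈ T) → l.length + 1 = n → mulList a l = 0

/-- `a` is nilpotent: `aⁿ = 0` for some `n ≥ 1`. -/
def IsNilE {R : Type*} [Mul R] [Zero R] (a : R) : Prop := ∃ n, 1 ≤ n ∧ pw a n = 0

/-- A nil ring: every element is nilpotent. -/
def IsNilRing (R : Type*) [Mul R] [Zero R] : Prop := ∀ a : R, IsNilE a

/-- An `S`-grading of the ring `R`: a direct sum decomposition into additive
subgroups with `R_g R_h ⊆ R_{gh}`. -/
structure IsGrading {S R : Type*} [Monoid S] [NonUnitalRing R] [DecidableEq S]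
    (A : S → AddSubgroup R) : Prop where
  mul_mem : ∀ {g h : S} {x y : R}, x ∈ A g → y ∈ A h → x * y ∈ A (g * h)
  isInternal : DirectSum.IsInternal A

/-- Grading by an additively written monoid. -/
structure IsAddGrading {S R : Type*} [AddMonoid S] [NonUnitalRing R] [DecidableEq S]
    (A : S → AddSubgroup R) : Prop where
  mul_mem : ∀ {g h : S} {x y : R}, x ∈ A g → y ∈ A h → x * y ∈ A (g + h)
  isInternal : DirectSum.IsInternal A

/-- The subset `T` of a ring is `f`-commutative: there are a semigroup `G` acting on it
from the left and a map `f` with `a*b = f(a,b)·(b*a)`. -/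
def IsFCommutativeOn {R : Type*} [Mul R] (T : Set R) : Prop :=
  ∃ (G : Type) (_ : Semigroup G) (act : G → R → R),
    (∀ l m : G, ∀ x : R, x ∈ T → act (l * m) x = act l (act m x)) ∧
    (∀ l : G, ∀ x : R, x ∈ T → act l x ∈ T) ∧
    (∀ l : G, ∀ x y : R, x ∈ T → y ∈ T → act l (x * y) = act l x * y) ∧
    ∃ f : R → R → G, ∀ a b : R, a ∈ T → b ∈ T → a * b = act (f a b) (b * a)

/-- The ring `R` is `f`-commutative. -/
def IsFCommutative (R : Type*) [Mul R] : Prop :=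
  ∃ (G : Type) (_ : Semigroup G) (act : G → R → R),
    (∀ l m : G, ∀ x : R, act (l * m) x = act l (act m x)) ∧
    (∀ l : G, ∀ x y : R, act l (x * y) = act l x * y) ∧
    ∃ f : R → R → G, ∀ a b : R, a * b = act (f a b) (b * a)

/-- The order of `g`: least `n ≥ 1` with `gⁿ = 1`, and `0` if no such `n` exists. -/
noncomputable def ordOf {S : Type*} [Monoid S] (g : S) : ℕ := sInf {n | 1 ≤ n ∧ g ^ n = 1}


/-!
Every product is a sum of products `x₁ ⋯ xₙ` of homogeneous elements, of degrees `g₁, …, gₙ`.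
If some prefix degree `g₁ ⋯ gₖ` lies outside the support, the partial product `x₁ ⋯ xₖ`, and
with it the whole product, vanishes. Otherwise the `n + 1` prefix degrees `1, g₁, g₁g₂, …` lie in
`supp ∪ {1}`, so for `n = |supp ∪ {1}| * r` some value `q` occurs `r + 1` times. By left
cancellation, each of the `r` segments between consecutive occurrences of `q` has degree `1`, so
the product contains a product of `r` elements of `R_e` and vanishes. For `r > 1` the identity
lies in the support; for `r = 1` it does not, since `R_e = 0`.
-/

section MulList

variable {R : Type*}

@[simp] theorem mulList_nil [Mul R] (a : R) : mulList a [] = a := rfl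

@[simp] theorem mulList_cons [Mul R] (a x : R) (l : List R) :
    mulList a (x :: l) = mulList (a * x) l := rfl

theorem mulList_append [Mul R] (a : R) (l₁ l₂ : List R) :
    mulList a (l₁ ++ l₂) = mulList (mulList a l₁) l₂ :=
  List.foldl_append ..

theorem zero_mulList [MulZeroClass R] (l : List R) : mulList 0 l = 0 := by
  induction l with
  | nil => rfl
  | cons x l ih => rwa [mulList_cons, zero_mul]

theorem mul_mulList [Semigroup R] (a x : R) (l : List R) :
    a * mulList x l = mulList (a * x) l := by
  induction l generalizing x with
  | nil => rfl
  | cons y l ih => rw [mulList_cons, mulList_cons, ih, mul_assoc]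

theorem powZeroOn_one_iff [Mul R] [Zero R] {T : Set R} : PowZeroOn T 1 ↔ ∀ a ∈ T, a = 0 := by
  refine ⟨fun h a ha => h a [] ha (by simp) rfl, fun h a l ha _ hl => ?_⟩
  rw [List.length_eq_zero_iff.mp (by omega : l.length = 0)]
  exact h a ha

end MulList

theorem List.exists_lt_count_of_card_mul_lt_length {α : Type*} [DecidableEq α] {T : Finset α}
    {L : List α} {k : ℕ} (hL : ∀ x ∈ L, x ∈ T) (hlt : T.card * k < L.length) :
    ∃ q, k < L.count q := by
  have hsum : ∑ q ∈ T, (L : Multiset α).count q = L.length := Multiset.sum_count_eq_card hL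
  obtain ⟨q, -, hq⟩ := Finset.exists_lt_of_sum_lt (f := fun _ => k)
    (g := fun q => (L : Multiset α).count q) (by rwa [Finset.sum_const, smul_eq_mul, hsum])
  exact ⟨q, by simpa using hq⟩

theorem List.count_scanl_mul_left {S : Type*} [Monoid S] [IsLeftCancelMul S] [DecidableEq S]
    (q g : S) (G : List S) :
    (G.scanl (· * ·) (q * g)).count q = (G.scanl (· * ·) g).count 1 := by
  induction G generalizing g with
  | nil => simp [List.count_cons]
  | cons h G ih => simp [List.count_cons, mul_assoc, ih]

section Homogeneous

variable {S R : Type*} [Monoid S] [NonUnitalRing R] {A : S → AddSubgroup R}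

/-- Products of `k + 1` homogeneous elements. -/
def homogeneousProducts (A : S → AddSubgroup R) (k : ℕ) : Set R :=
  {y | ∃ a l, (∀ x ∈ a :: l, SetLike.IsHomogeneousElem A x) ∧ l.length = k ∧ y = mulList a l}

theorem IsGrading.mem_closure_isHomogeneousElem [DecidableEq S] (hA : IsGrading A) (x : R) :
    x ∈ AddSubmonoid.closure {y : R | SetLike.IsHomogeneousElem A y} := by
  have hle : ⨆ g, (A g).toAddSubmonoid ≤
      AddSubmonoid.closure {y : R | SetLike.IsHomogeneousElem A y} :=
    iSup_le fun g y hy => AddSubmonoid.subset_closure ⟨g, hy⟩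
  rw [DirectSum.IsInternal.addSubmonoid_iSup_eq_top _ hA.isInternal] at hle
  exact hle trivial

theorem IsGrading.mulList_mem_closure_homogeneousProducts [DecidableEq S] (hA : IsGrading A)
    (a : R) (l : List R) :
    mulList a l ∈ AddSubmonoid.closure (homogeneousProducts A l.length) := by
  induction l using List.reverseRecOn with
  | nil =>
    refine AddSubmonoid.closure_mono ?_ (hA.mem_closure_isHomogeneousElem a)
    exact fun x hx => ⟨x, [], by simpa using hx, rfl, rfl⟩
  | append_singleton l x ih =>
    rw [mulList_append, mulList_cons, mulList_nil]
    have hmem := AddSubmonoid.mul_mem_mul ih (hA.mem_closure_isHomogeneousElem x)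
    rw [AddSubmonoid.closure_mul_closure] at hmem
    refine AddSubmonoid.closure_mono ?_ hmem
    rintro _ ⟨_, ⟨a', l', hl', hlen, rfl⟩, x', hx', rfl⟩
    refine ⟨a', l' ++ [x'], ?_, by simp [hlen], by simp [mulList_append]⟩
    rw [← List.cons_append, List.forall_mem_append]
    exact ⟨hl', by simpa using hx'⟩

theorem IsGrading.powZero_of_homogeneous [DecidableEq S] (hA : IsGrading A) {n : ℕ}
    (h : ∀ a l, (∀ x ∈ a :: l, SetLike.IsHomogeneousElem A x) → l.length + 1 = n →
      mulList a l = 0) :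
    PowZero R n := by
  intro a l hl
  have hzero : homogeneousProducts A l.length ⊆ ((⊥ : AddSubmonoid R) : Set R) := by
    rintro _ ⟨a', l', hl', hlen, rfl⟩
    exact h a' l' hl' (by omega)
  exact AddSubmonoid.closure_le.mpr hzero (hA.mulList_mem_closure_homogeneousProducts a l)

/-- `(l.map deg).scanl (· * ·) b` lists the degrees of the partial products
`c, c * l₀, c * l₀ * l₁, …` of `mulList c l`. -/
theorem scanl_ne_bot_of_mulList_ne_zero
    (hmul : ∀ {g h : S} {x y : R}, x ∈ A g → y ∈ A h → x * y ∈ A (g * h)) (deg : R → S) :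
    ∀ (l : List R) (c : R) (b : S), (∀ x ∈ l, x ∈ A (deg x)) → c ∈ A b → mulList c l ≠ 0 →
      ∀ p ∈ (l.map deg).scanl (· * ·) b, A p ≠ ⊥
  | [], c, b, _, hc, hne, p, hp, hbot => by
    rw [List.map_nil, List.scanl_nil, List.mem_singleton] at hp
    subst hp
    rw [hbot, AddSubgroup.mem_bot] at hc
    exact hne hc
  | x :: l, c, b, hdeg, hc, hne, p, hp, hbot => by
    rw [List.map_cons, List.scanl_cons, List.mem_cons] at hp
    rcases hp with rfl | hp
    · rw [hbot, AddSubgroup.mem_bot] at hc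
      exact hne (by rw [hc, zero_mulList])
    · exact scanl_ne_bot_of_mulList_ne_zero hmul deg l (c * x) (b * deg x)
        (fun y hy => hdeg y (List.mem_cons_of_mem x hy)) (hmul hc (hdeg x List.mem_cons_self))
        hne p hp hbot

theorem exists_mulList_eq_mulList_blocks [IsLeftCancelMul S] [DecidableEq S]
    (hmul : ∀ {g h : S} {x y : R}, x ∈ A g → y ∈ A h → x * y ∈ A (g * h)) (deg : R → S) :
    ∀ (l : List R) (c₀ : R) (b q : S) (m : ℕ), (∀ x ∈ l, x ∈ A (deg x)) → c₀ ∈ A b →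
      m < ((l.map deg).scanl (· * ·) b).count q →
      ∃ c t rest, c ∈ A q ∧ (∀ x ∈ t, x ∈ A 1) ∧ t.length = m ∧
        mulList c₀ l = mulList (mulList c t) rest
  | [], c₀, b, q, m, _, hc₀, hm => by
    rw [List.map_nil, List.scanl_nil, List.count_singleton] at hm
    split_ifs at hm with hb
    · exact ⟨c₀, [], [], (beq_iff_eq.mp hb) ▸ hc₀, by simp, by rw [List.length_nil]; omega, rfl⟩
    · omega
  | x :: l, c₀, b, q, m, hdeg, hc₀, hm => by
    have hx := hdeg x List.mem_cons_self
    have hl : ∀ y ∈ l, y ∈ A (deg y) := fun y hy => hdeg y (List.mem_cons_of_mem x hy)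
    rw [List.map_cons, List.scanl_cons, List.count_cons] at hm
    by_cases hb : b = q
    · subst hb
      rcases m with _ | m
      · exact ⟨c₀, [], x :: l, hc₀, by simp, rfl, rfl⟩
      -- left cancellation: the later visits of `q` are where the degree counted from `x` is `1`
      rw [List.count_scanl_mul_left] at hm
      obtain ⟨c, t, rest, hc, ht, hlen, heq⟩ :=
        exists_mulList_eq_mulList_blocks hmul deg l x (deg x) 1 m hl hx (by simpa using hm)
      refine ⟨c₀, c :: t, rest, hc₀, ?_, by simp [hlen], ?_⟩
      · simpa using ⟨hc, ht⟩
      · rw [mulList_cons, ← mul_mulList, heq, mul_mulList, mul_mulList, mulList_cons]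
    · exact exists_mulList_eq_mulList_blocks hmul deg l (c₀ * x) (b * deg x) q m hl (hmul hc₀ hx)
        (by simpa [hb] using hm)

theorem IsGrading.powZero_card_insert_one_mul [IsLeftCancelMul S] [DecidableEq S]
    (hA : IsGrading A) {r : ℕ} (hr : 1 ≤ r) (hre : PowZeroOn (A 1 : Set R) r) {T : Finset S}
    (hT : ∀ g, A g ≠ ⊥ → g ∈ T) :
    PowZero R ((insert 1 T).card * r) := by
  refine hA.powZero_of_homogeneous fun a l hl hlen => ?_
  choose! deg hdeg using hl
  have ha := hdeg a List.mem_cons_self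
  have hl : ∀ x ∈ l, x ∈ A (deg x) := fun x hx => hdeg x (List.mem_cons_of_mem a hx)
  by_contra hne
  have hsupp := scanl_ne_bot_of_mulList_ne_zero hA.mul_mem deg l a (deg a) hl ha hne
  have hP : ∀ p ∈ 1 :: (l.map deg).scanl (· * ·) (deg a), p ∈ insert 1 T := by
    simpa using fun p hp => Or.inr (hT p (hsupp p hp))
  obtain ⟨q, hq⟩ := List.exists_lt_count_of_card_mul_lt_length hP (k := r) (by
    simp only [List.length_cons, List.length_scanl, List.length_map]; omega)
  rw [List.count_cons] at hq
  by_cases hq1 : q = 1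
  · -- the head `1` is the degree of the empty prefix, so `c` itself is the first block
    subst hq1
    obtain ⟨c, t, rest, hc, ht, hlen, heq⟩ := exists_mulList_eq_mulList_blocks hA.mul_mem deg
      l a (deg a) 1 (r - 1) hl ha (by rw [if_pos BEq.rfl] at hq; omega)
    exact hne (by rw [heq, hre c t hc ht (by omega), zero_mulList])
  · obtain ⟨c, t, rest, hc, ht, hlen, heq⟩ := exists_mulList_eq_mulList_blocks hA.mul_mem deg
      l a (deg a) q r hl ha (by simpa [Ne.symm hq1] using hq)
    obtain ⟨t₀, t, rfl⟩ := List.exists_cons_of_length_eq_add_one (l := t) (n := r - 1) (by omega)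
    have hzero : mulList t₀ t = 0 := hre t₀ t (ht t₀ List.mem_cons_self)
      (fun x hx => ht x (List.mem_cons_of_mem t₀ hx)) (by simpa using hlen)
    exact hne (by rw [heq, mulList_cons, ← mul_mulList, hzero, mul_zero, zero_mulList])

end Homogeneous

theorem stmt_8_general {S R : Type*} [Monoid S] [IsLeftCancelMul S] [DecidableEq S]
    [NonUnitalRing R] (A : S → AddSubgroup R) (hA : IsGrading A)
    (d r : ℕ) (hfin : {g : S | A g ≠ ⊥}.Finite) (hcard : hfin.toFinset.card = d)
    (hre : PowZeroOn (A 1 : Set R) r)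
    (hmin : ∀ m, 1 ≤ m → m < r → ¬ PowZeroOn (A 1 : Set R) m) :
    (1 < r → PowZero R (d * r) ∧ ∀ m, 1 ≤ m → m < r → ¬ PowZero R m) ∧
    (r = 1 → PowZero R (d + 1)) := by
  have hsupp : ∀ g, A g ≠ ⊥ → g ∈ hfin.toFinset := fun g => hfin.mem_toFinset.mpr
  refine ⟨fun hr => ⟨?_, fun m hm hmr hR => hmin m hm hmr fun a l _ _ => hR a l⟩, fun hr => ?_⟩
  · have h1 : A 1 ≠ ⊥ := fun h => hmin 1 le_rfl hr <|
      powZeroOn_one_iff.mpr ((AddSubgroup.eq_bot_iff_forall _).mp h)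
    have := hA.powZero_card_insert_one_mul hr.le hre hsupp
    rwa [Finset.insert_eq_of_mem (hsupp 1 h1), hcard] at this
  · subst hr
    have h1 : A 1 = ⊥ := (AddSubgroup.eq_bot_iff_forall _).mpr (powZeroOn_one_iff.mp hre)
    have := hA.powZero_card_insert_one_mul le_rfl hre hsupp
    rwa [Finset.card_insert_of_notMem fun h => hfin.mem_toFinset.mp h h1, hcard, mul_one] at this

theorem stmt_8 {S R : Type*} [Monoid S] [IsLeftCancelMul S] [DecidableEq S]
    [NonUnitalRing R] (A : S → AddSubgroup R) (hA : IsGrading A)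
    (d r : ℕ) (hfin : {g : S | A g ≠ ⊥}.Finite) (hcard : hfin.toFinset.card = d)
    (hr : 1 ≤ r)
    (hre : PowZeroOn (A 1 : Set R) r)
    (hmin : ∀ m, 1 ≤ m → m < r → ¬ PowZeroOn (A 1 : Set R) m) :
    (1 < r → PowZero R (d * r) ∧ ∀ m, 1 ≤ m → m < r → ¬ PowZero R m) ∧
    (r = 1 → PowZero R (d + 1)) :=
  stmt_8_general A hA d r hfin hcard hre hmin
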